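/- Let Θ* be a real symmetric positive definite p×p matrix with Σ* = (Θ*)⁻¹, let T = {(i,j) : Θ*_{ij} ≠ 0} with cardinality m, and let c > 0. Let S̃ be a real symmetric p×p matrix, λ > 0, and α ∈ (0, 1) such that max_{i,j} |S̃_{ij} − Σ*_{ij}| ≤ α·λ. Let r > (1 + α)·λ·√m / c and suppose that for every symmetric Δ with ‖Δ‖_F = r and Θ* + Δ positive definite, the curvature bound ∫₀¹ (1 − v)·tr(((Θ* + vΔ)⁻¹Δ)²) dv ≥ c·‖Δ‖_F² holds. If Θ̂ is a minimizer of Θ ↦ −log det Θ + tr(S̃Θ) + λ‖Θ‖₁ over symmetric positive definite matrices, then ‖Θ̂ − Θ*‖_F < r. -/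

import Mathlib

/-!
Write `f` for the graphical lasso objective and suppose `‖Θ̂ − Θ*‖_F ≥ r`. Moving from `Θ*`
towards `Θ̂` one reaches a point `Θ* + Δ` with `‖Δ‖_F = r`. Along a line, the second derivative
of `−log det` is `tr(((Θ + vΔ)⁻¹Δ)²) ≥ 0`, so `f` is convex on the segment and
`f(Θ* + Δ) ≤ f(Θ*)` because `Θ̂` minimises `f`. On the other hand, Taylor's formula with integral
remainder for `−log det`, the curvature bound, the entrywise bound on `S̃ − Σ*` and the splitting of
`‖·‖₁` along the support `T` of `Θ*` give
`f(Θ* + Δ) − f(Θ*) ≥ c r² − (1 + α) λ ‖Δ_T‖₁ ≥ c r² − (1 + α) λ √m r > 0`.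
-/

open scoped Matrix

noncomputable def frobNorm {p q : ℕ} (A : Matrix (Fin p) (Fin q) ℝ) : ℝ :=
  Real.sqrt (∑ i, ∑ j, (A i j) ^ 2)

open Matrix

namespace Matrix

variable {n : Type*}

theorem PosDef.add_smul_sub {A B : Matrix n n ℝ} (hA : A.PosDef) (hB : B.PosDef) {t : ℝ}
    (ht : t ∈ Set.Icc (0 : ℝ) 1) : (A + t • (B - A)).PosDef := by
  rcases ht.2.lt_or_eq with ht1 | rfl
  · have hcomb : A + t • (B - A) = (1 - t) • A + t • B := by module
    rw [hcomb]
    exact (hA.smul (sub_pos.mpr ht1)).add_posSemidef (hB.posSemidef.smul ht.1)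
  · simpa using hB

variable [Fintype n] [DecidableEq n]

theorem hasDerivAt_det_one_add_smul (C : Matrix n n ℝ) :
    HasDerivAt (fun s : ℝ => (1 + s • C).det) C.trace 0 := by
  have h := (det (1 + (Polynomial.X : Polynomial ℝ) • C.map Polynomial.C)).hasDerivAt 0
  rw [derivative_det_one_add_X_smul] at h
  refine h.congr_of_eventuallyEq (Filter.Eventually.of_forall fun s => ?_)
  change (1 + s • C).det = Polynomial.eval s _
  rw [det_one_add_smul]
  conv_rhs => rw [det_one_add_X_smul]
  simp only [Polynomial.eval_add, Polynomial.eval_one, Polynomial.eval_smul, Polynomial.eval_X,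
    Polynomial.eval_mul, Polynomial.eval_pow, smul_eq_mul]

theorem hasDerivAt_det_add_smul (A B : Matrix n n ℝ) {t : ℝ} (h : IsUnit (A + t • B)) :
    HasDerivAt (fun s : ℝ => (A + s • B).det)
      ((A + t • B).det * ((A + t • B)⁻¹ * B).trace) t := by
  set M := A + t • B
  have hfactor : ∀ s : ℝ, A + s • B = M * (1 + (s - t) • (M⁻¹ * B)) := fun s => by
    rw [mul_add, mul_one, mul_smul_comm, ← mul_assoc, mul_nonsing_inv _
      ((isUnit_iff_isUnit_det M).mp h), one_mul]
    module
  have hC := HasDerivAt.comp_sub_const t t (sub_self t ▸ hasDerivAt_det_one_add_smul (M⁻¹ * B))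
  simpa only [hfactor, det_mul] using hC.const_mul M.det

theorem hasDerivAt_log_det_add_smul (A B : Matrix n n ℝ) {t : ℝ} (h : IsUnit (A + t • B)) :
    HasDerivAt (fun s : ℝ => Real.log (A + s • B).det) ((A + t • B)⁻¹ * B).trace t := by
  have hdet : (A + t • B).det ≠ 0 := ((isUnit_iff_isUnit_det _).mp h).ne_zero
  convert (hasDerivAt_det_add_smul A B h).log hdet using 1
  field_simp

section NormedRing

attribute [local instance] Matrix.linftyOpNormedRing Matrix.linftyOpNormedAlgebra

theorem hasDerivAt_inv_add_smul (A B : Matrix n n ℝ) {t : ℝ} (h : IsUnit (A + t • B)) :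
    HasDerivAt (fun s : ℝ => (A + s • B)⁻¹) (-((A + t • B)⁻¹ * B * (A + t • B)⁻¹)) t := by
  have hline : HasDerivAt (fun s : ℝ => A + s • B) B t :=
    (((hasDerivAt_id t).smul_const B).const_add A).congr_deriv (one_smul ℝ B)
  have hinv : HasFDerivAt Ring.inverse
      (-(ContinuousLinearMap.mulLeftRight ℝ _ (A + t • B)⁻¹ (A + t • B)⁻¹)) (A + t • B) := by
    simpa [h.unit_spec, nonsing_inv_eq_ringInverse] using hasFDerivAt_ringInverse (𝕜 := ℝ) h.unit
  simp only [nonsing_inv_eq_ringInverse] at hinv ⊢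
  refine (hinv.comp_hasDerivAt t hline).congr_deriv ?_
  simp

theorem hasDerivAt_trace_inv_add_smul_mul (A B : Matrix n n ℝ) {t : ℝ} (h : IsUnit (A + t • B)) :
    HasDerivAt (fun s : ℝ => ((A + s • B)⁻¹ * B).trace)
      (-(((A + t • B)⁻¹ * B) * ((A + t • B)⁻¹ * B)).trace) t := by
  have htrace := (traceLinearMap n ℝ ℝ).toContinuousLinearMap.hasFDerivAt (x := (A + t • B)⁻¹ * B)
  refine (htrace.comp_hasDerivAt t ((hasDerivAt_inv_add_smul A B h).mul_const B)).congr_deriv ?_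
  change (-((A + t • B)⁻¹ * B * (A + t • B)⁻¹) * B).trace = _
  simp [mul_assoc]

theorem continuousAt_trace_sq_inv_add_smul_mul (A B : Matrix n n ℝ) {t : ℝ}
    (h : IsUnit (A + t • B)) :
    ContinuousAt (fun s : ℝ => (((A + s • B)⁻¹ * B) * ((A + s • B)⁻¹ * B)).trace) t := by
  have hinv := (hasDerivAt_inv_add_smul A B h).continuousAt
  fun_prop

end NormedRing

theorem integral_one_sub_mul_trace_sq_inv_add_smul_mul (A B : Matrix n n ℝ)
    (h : ∀ v ∈ Set.Icc (0 : ℝ) 1, IsUnit (A + v • B)) :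
    ∫ v in (0 : ℝ)..1, (1 - v) * (((A + v • B)⁻¹ * B) * ((A + v • B)⁻¹ * B)).trace
      = (A⁻¹ * B).trace - Real.log (A + B).det + Real.log A.det := by
  rw [← Set.uIcc_of_le zero_le_one] at h
  set G : ℝ → ℝ := fun v => ((A + v • B)⁻¹ * B).trace
  set g : ℝ → ℝ := fun v => (((A + v • B)⁻¹ * B) * ((A + v • B)⁻¹ * B)).trace
  have hG : ∀ v ∈ Set.uIcc (0 : ℝ) 1, HasDerivAt G (-g v) v :=
    fun v hv => hasDerivAt_trace_inv_add_smul_mul A B (h v hv)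
  have hg : IntervalIntegrable g MeasureTheory.volume 0 1 :=
    ContinuousOn.intervalIntegrable fun v hv =>
      (continuousAt_trace_sq_inv_add_smul_mul A B (h v hv)).continuousWithinAt
  have hGint : IntervalIntegrable G MeasureTheory.volume 0 1 :=
    ContinuousOn.intervalIntegrable fun v hv => (hG v hv).continuousAt.continuousWithinAt
  have hparts := intervalIntegral.integral_mul_deriv_eq_deriv_mul
    (fun v _ => ((hasDerivAt_id v).const_sub 1).congr_deriv (by simp)) hG
    (intervalIntegrable_const (c := (-1 : ℝ))) hg.neg
  have hlog : ∫ v in (0 : ℝ)..1, G v = Real.log (A + B).det - Real.log A.det := by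
    rw [intervalIntegral.integral_eq_sub_of_hasDerivAt
      (fun v hv => hasDerivAt_log_det_add_smul A B (h v hv)) hGint]
    simp
  have hG0 : G 0 = (A⁻¹ * B).trace := by simp [G]
  simp only [id_eq, mul_neg, intervalIntegral.integral_neg, neg_one_mul, sub_self, zero_mul,
    sub_zero, one_mul, hG0] at hparts
  change ∫ v in (0 : ℝ)..1, (1 - v) * g v = _
  linarith

open scoped MatrixOrder in
theorem PosSemidef.trace_mul_nonneg {A B : Matrix n n ℝ} (hA : A.PosSemidef)
    (hB : B.PosSemidef) : 0 ≤ (A * B).trace := by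
  obtain ⟨Q, hQ, rfl⟩ : ∃ Q : Matrix n n ℝ, Qᴴ = Q ∧ A = Q * Q :=
    ⟨CFC.sqrt A, (CFC.sqrt_nonneg A).posSemidef.1,
      (CFC.sqrt_mul_sqrt_self A hA.nonneg).symm⟩
  have hQBQ := hB.conjTranspose_mul_mul_same Q
  rw [hQ] at hQBQ
  calc 0 ≤ (Q * B * Q).trace := hQBQ.trace_nonneg
    _ = (Q * Q * B).trace := by rw [trace_mul_comm, ← mul_assoc]

theorem PosDef.trace_sq_inv_mul_nonneg {A B : Matrix n n ℝ} (hA : A.PosDef) (hB : B.IsHermitian) :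
    0 ≤ ((A⁻¹ * B) * (A⁻¹ * B)).trace := by
  have h := hA.inv.posSemidef.trace_mul_nonneg (hA.inv.posSemidef.conjTranspose_mul_mul_same B)
  rw [hB.eq] at h
  simpa only [mul_assoc] using h

theorem convexOn_neg_log_det_add_smul {A B : Matrix n n ℝ} (hB : B.IsHermitian) {D : Set ℝ}
    (hD : Convex ℝ D) (hPD : ∀ s ∈ D, (A + s • B).PosDef) :
    ConvexOn ℝ D (fun s : ℝ => -Real.log (A + s • B).det) := by
  have hderiv (s) (hs : s ∈ D) := (hasDerivAt_log_det_add_smul A B (hPD s hs).isUnit).neg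
  refine convexOn_of_hasDerivWithinAt2_nonneg hD
    (f'' := fun s => (((A + s • B)⁻¹ * B) * ((A + s • B)⁻¹ * B)).trace)
    (fun s hs => (hderiv s hs).continuousAt.continuousWithinAt)
    (fun s hs => (hderiv s (interior_subset hs)).hasDerivWithinAt) (fun s hs => ?_)
    (fun s hs => (hPD s (interior_subset hs)).trace_sq_inv_mul_nonneg hB)
  simpa using (hasDerivAt_trace_inv_add_smul_mul A B
    (hPD s (interior_subset hs)).isUnit).fun_neg.hasDerivWithinAt

end Matrix

section EntrywiseL1

variable {m n : Type*} [Fintype m] [Fintype n]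

theorem sum_abs_eq_sum_add_sum_compl [DecidableEq m] [DecidableEq n] (A : Matrix m n ℝ)
    (T : Finset (m × n)) :
    ∑ i, ∑ j, |A i j| = ∑ x ∈ T, |A x.1 x.2| + ∑ x ∈ Tᶜ, |A x.1 x.2| := by
  rw [Finset.sum_add_sum_compl, Fintype.sum_prod_type]

theorem sum_abs_sub_sum_abs_add_le [DecidableEq m] [DecidableEq n] {Θ : Matrix m n ℝ}
    {T : Finset (m × n)} (hT : ∀ x ∉ T, Θ x.1 x.2 = 0) (Δ : Matrix m n ℝ) :
    ∑ i, ∑ j, |Θ i j| - ∑ i, ∑ j, |(Θ + Δ) i j|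
      ≤ ∑ x ∈ T, |Δ x.1 x.2| - ∑ x ∈ Tᶜ, |Δ x.1 x.2| := by
  have hoff : ∀ x ∈ Tᶜ, |Θ x.1 x.2| = 0 ∧ |(Θ + Δ) x.1 x.2| = |Δ x.1 x.2| := fun x hx => by
    simp [hT x (Finset.mem_compl.mp hx)]
  have hon : ∑ x ∈ T, |Θ x.1 x.2| - ∑ x ∈ T, |(Θ + Δ) x.1 x.2| ≤ ∑ x ∈ T, |Δ x.1 x.2| := by
    rw [← Finset.sum_sub_distrib]
    refine Finset.sum_le_sum fun x _ => ?_
    simpa [abs_sub_comm] using abs_sub_abs_le_abs_sub (Θ x.1 x.2) ((Θ + Δ) x.1 x.2)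
  rw [sum_abs_eq_sum_add_sum_compl Θ T, sum_abs_eq_sum_add_sum_compl (Θ + Δ) T,
    Finset.sum_congr rfl fun x hx => (hoff x hx).1,
    Finset.sum_congr rfl fun x hx => (hoff x hx).2]
  simp only [Finset.sum_const_zero]
  linarith

theorem neg_mul_sum_abs_le_trace_mul {E Δ : Matrix n n ℝ} {ε : ℝ} (hE : ∀ i j, |E i j| ≤ ε) :
    -(ε * ∑ i, ∑ j, |Δ i j|) ≤ (E * Δ).trace := by
  have hentry (i j : n) : -(ε * |Δ j i|) ≤ E i j * Δ j i := by
    have := (abs_mul (E i j) (Δ j i)).symm ▸ neg_abs_le (E i j * Δ j i)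
    nlinarith [mul_le_mul_of_nonneg_right (hE i j) (abs_nonneg (Δ j i))]
  calc -(ε * ∑ i, ∑ j, |Δ i j|) = ∑ i, ∑ j, -(ε * |Δ j i|) := by
        rw [Finset.sum_comm (f := fun i j => -(ε * |Δ j i|))]
        simp [Finset.mul_sum]
    _ ≤ ∑ i, ∑ j, E i j * Δ j i := by gcongr with i _ j _; exact hentry i j
    _ = (E * Δ).trace := by simp [trace, mul_apply]

theorem sum_abs_add_smul_sub_le (A B : Matrix m n ℝ) {t : ℝ} (ht0 : 0 ≤ t) (ht1 : t ≤ 1) :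
    ∑ i, ∑ j, |(A + t • (B - A)) i j|
      ≤ (1 - t) * ∑ i, ∑ j, |A i j| + t * ∑ i, ∑ j, |B i j| := by
  have hentry (i j) : |(A + t • (B - A)) i j| ≤ (1 - t) * |A i j| + t * |B i j| := by
    calc |(A + t • (B - A)) i j| = |(1 - t) * A i j + t * B i j| := by
          simp only [Matrix.add_apply, Matrix.smul_apply, Matrix.sub_apply, smul_eq_mul]
          ring_nf
      _ ≤ |(1 - t) * A i j| + |t * B i j| := abs_add_le _ _
      _ = (1 - t) * |A i j| + t * |B i j| := by
        rw [abs_mul, abs_mul, abs_of_nonneg (sub_nonneg.mpr ht1), abs_of_nonneg ht0]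
  calc ∑ i, ∑ j, |(A + t • (B - A)) i j| ≤ ∑ i, ∑ j, ((1 - t) * |A i j| + t * |B i j|) := by
        gcongr with i _ j _; exact hentry i j
    _ = _ := by simp only [Finset.sum_add_distrib, Finset.mul_sum]

end EntrywiseL1

section FrobeniusNorm

variable {p q : ℕ}

theorem frobNorm_smul_of_nonneg {t : ℝ} (ht : 0 ≤ t) (A : Matrix (Fin p) (Fin q) ℝ) :
    frobNorm (t • A) = t * frobNorm A := by
  have hsq : ∑ i, ∑ j, (t • A) i j ^ 2 = t ^ 2 * ∑ i, ∑ j, A i j ^ 2 := by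
    simp [mul_pow, Finset.mul_sum]
  rw [frobNorm, frobNorm, hsq, Real.sqrt_mul (sq_nonneg t), Real.sqrt_sq ht]

theorem sum_abs_le_sqrt_card_mul_frobNorm (A : Matrix (Fin p) (Fin q) ℝ)
    (T : Finset (Fin p × Fin q)) :
    ∑ x ∈ T, |A x.1 x.2| ≤ Real.sqrt T.card * frobNorm A := by
  have hsub : ∑ x ∈ T, A x.1 x.2 ^ 2 ≤ ∑ i, ∑ j, A i j ^ 2 := by
    rw [← Fintype.sum_prod_type']
    exact Finset.sum_le_sum_of_subset_of_nonneg (Finset.subset_univ T)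
      fun _ _ _ => sq_nonneg _
  calc ∑ x ∈ T, |A x.1 x.2| = ∑ x ∈ T, 1 * |A x.1 x.2| := by simp
    _ ≤ Real.sqrt (∑ x ∈ T, 1 ^ 2) * Real.sqrt (∑ x ∈ T, |A x.1 x.2| ^ 2) :=
      Real.sum_mul_le_sqrt_mul_sqrt _ _ _
    _ ≤ Real.sqrt T.card * frobNorm A := by
      simp only [one_pow, Finset.sum_const, nsmul_eq_mul, mul_one, sq_abs]
      exact mul_le_mul_of_nonneg_left (Real.sqrt_le_sqrt hsub) (Real.sqrt_nonneg _)

end FrobeniusNorm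

section GraphicalLasso

variable {n : Type*} [Fintype n] [DecidableEq n]

noncomputable def graphicalLassoObjective (S : Matrix n n ℝ) (lam : ℝ) (Θ : Matrix n n ℝ) : ℝ :=
  -Real.log Θ.det + (S * Θ).trace + lam * ∑ i, ∑ j, |Θ i j|

theorem graphicalLassoObjective_add_smul_sub_le (S : Matrix n n ℝ) {lam : ℝ} (hlam : 0 ≤ lam)
    {A B : Matrix n n ℝ} (hA : A.PosDef) (hB : B.PosDef) {t : ℝ} (ht : t ∈ Set.Icc (0 : ℝ) 1) :
    graphicalLassoObjective S lam (A + t • (B - A))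
      ≤ (1 - t) * graphicalLassoObjective S lam A + t * graphicalLassoObjective S lam B := by
  have hlogdet := (convexOn_neg_log_det_add_smul (hB.1.sub hA.1) (convex_Icc 0 1)
    fun s hs => hA.add_smul_sub hB hs).2 (Set.left_mem_Icc.2 zero_le_one)
    (Set.right_mem_Icc.2 zero_le_one) (sub_nonneg.2 ht.2) ht.1 (by ring)
  have htrace : (S * (A + t • (B - A))).trace = (1 - t) * (S * A).trace + t * (S * B).trace := by
    simp only [mul_add, mul_sub, mul_smul_comm, trace_add, trace_sub, trace_smul, smul_eq_mul]
    ring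
  have hl1 := mul_le_mul_of_nonneg_left (sum_abs_add_smul_sub_le A B ht.1 ht.2) hlam
  simp only [smul_eq_mul, mul_zero, mul_one, zero_add, zero_smul, add_zero, one_smul,
    add_sub_cancel] at hlogdet
  unfold graphicalLassoObjective
  rw [htrace]
  linarith

theorem graphicalLassoObjective_add_sub (S : Matrix n n ℝ) (lam : ℝ) {Θ Δ : Matrix n n ℝ}
    (h : ∀ v ∈ Set.Icc (0 : ℝ) 1, IsUnit (Θ + v • Δ)) :
    graphicalLassoObjective S lam (Θ + Δ) - graphicalLassoObjective S lam Θ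
      = (∫ v in (0 : ℝ)..1, (1 - v) * (((Θ + v • Δ)⁻¹ * Δ) * ((Θ + v • Δ)⁻¹ * Δ)).trace)
        + ((S - Θ⁻¹) * Δ).trace + lam * (∑ i, ∑ j, |(Θ + Δ) i j| - ∑ i, ∑ j, |Θ i j|) := by
  rw [integral_one_sub_mul_trace_sq_inv_add_smul_mul Θ Δ h]
  simp only [graphicalLassoObjective, mul_add, sub_mul, trace_add, trace_sub]
  ring

theorem neg_mul_sum_abs_support_le {Θ Δ E : Matrix n n ℝ} {T : Finset (n × n)}
    (hT : ∀ x ∉ T, Θ x.1 x.2 = 0) {ε lam : ℝ} (hE : ∀ i j, |E i j| ≤ ε) (hε : 0 ≤ ε)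
    (hεlam : ε ≤ lam) :
    -((lam + ε) * ∑ x ∈ T, |Δ x.1 x.2|)
      ≤ (E * Δ).trace + lam * (∑ i, ∑ j, |(Θ + Δ) i j| - ∑ i, ∑ j, |Θ i j|) := by
  have htrace := neg_mul_sum_abs_le_trace_mul (Δ := Δ) hE
  have hl1 := mul_le_mul_of_nonneg_left (sum_abs_sub_sum_abs_add_le hT Δ) (hε.trans hεlam)
  have hoff : 0 ≤ ∑ x ∈ Tᶜ, |Δ x.1 x.2| := Finset.sum_nonneg fun _ _ => abs_nonneg _
  rw [sum_abs_eq_sum_add_sum_compl Δ T] at htrace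
  nlinarith [mul_le_mul_of_nonneg_right (sub_nonneg.2 hεlam) hoff]

end GraphicalLasso

theorem stmt17_general {p : ℕ} (Θstar : Matrix (Fin p) (Fin p) ℝ) (hΘstar : Θstar.PosDef)
    (Sigstar : Matrix (Fin p) (Fin p) ℝ) (hSigstar : Sigstar = Θstar⁻¹)
    (T : Finset (Fin p × Fin p)) (hT : ∀ q : Fin p × Fin p, q ∈ T ↔ Θstar q.1 q.2 ≠ 0)
    (m : ℕ) (hm : m = T.card) (c : ℝ) (hc : 0 < c)
    (Stilde : Matrix (Fin p) (Fin p) ℝ)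
    (lam α : ℝ) (hlam : 0 < lam) (hα : α ∈ Set.Ioo (0 : ℝ) 1)
    (hmax : ∀ i j, |Stilde i j - Sigstar i j| ≤ α * lam)
    (r : ℝ) (hr : (1 + α) * lam * Real.sqrt m / c < r)
    (hcurv : ∀ Δ : Matrix (Fin p) (Fin p) ℝ, Δᵀ = Δ → frobNorm Δ = r →
      (Θstar + Δ).PosDef →
      c * frobNorm Δ ^ 2 ≤
        ∫ v in (0 : ℝ)..1,
          (1 - v) * ((((Θstar + v • Δ)⁻¹ * Δ) * ((Θstar + v • Δ)⁻¹ * Δ)).trace))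
    (Θhat : Matrix (Fin p) (Fin p) ℝ) (hΘhatPD : Θhat.PosDef)
    (hΘhatmin : ∀ Θ : Matrix (Fin p) (Fin p) ℝ, Θ.PosDef →
      -Real.log Θhat.det + (Stilde * Θhat).trace + lam * ∑ i, ∑ j, |Θhat i j| ≤
        -Real.log Θ.det + (Stilde * Θ).trace + lam * ∑ i, ∑ j, |Θ i j|) :
    frobNorm (Θhat - Θstar) < r := by
  obtain ⟨hα0, hα1⟩ := hα
  by_contra! hfar
  have hr0 : 0 < r := lt_of_le_of_lt (by positivity) hr
  have hfar0 : 0 < frobNorm (Θhat - Θstar) := hr0.trans_le hfar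
  set t := r / frobNorm (Θhat - Θstar)
  have ht : t ∈ Set.Icc (0 : ℝ) 1 := ⟨by positivity, div_le_one_of_le₀ hfar hfar0.le⟩
  set Δ := t • (Θhat - Θstar)
  have hΔr : frobNorm Δ = r := by
    rw [frobNorm_smul_of_nonneg ht.1]
    exact div_mul_cancel₀ r hfar0.ne'
  have hΔsymm : Δᵀ = Δ := by
    rw [transpose_smul, ← conjTranspose_eq_transpose_of_trivial, (hΘhatPD.1.sub hΘstar.1).eq]
  have hPD (v) (hv : v ∈ Set.Icc (0 : ℝ) 1) : (Θstar + v • Δ).PosDef := by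
    simpa [Δ, smul_smul] using
      hΘstar.add_smul_sub hΘhatPD ⟨mul_nonneg hv.1 ht.1, mul_le_one₀ hv.2 ht.1 ht.2⟩
  have hdecr : graphicalLassoObjective Stilde lam (Θstar + Δ)
      ≤ graphicalLassoObjective Stilde lam Θstar := by
    have hmin : graphicalLassoObjective Stilde lam Θhat
        ≤ graphicalLassoObjective Stilde lam Θstar := hΘhatmin Θstar hΘstar
    have hconv : graphicalLassoObjective Stilde lam (Θstar + Δ)
        ≤ (1 - t) * graphicalLassoObjective Stilde lam Θstar
          + t * graphicalLassoObjective Stilde lam Θhat :=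
      graphicalLassoObjective_add_smul_sub_le Stilde hlam.le hΘstar hΘhatPD ht
    linarith [mul_le_mul_of_nonneg_left hmin ht.1]
  have hgrowth := graphicalLassoObjective_add_sub Stilde lam fun v hv => (hPD v hv).isUnit
  have hcurvΔ := hcurv Δ hΔsymm hΔr (by simpa using hPD 1 (Set.right_mem_Icc.2 zero_le_one))
  have hlin := neg_mul_sum_abs_support_le (E := Stilde - Θstar⁻¹) (Δ := Δ)
    (fun x hx => not_not.mp (mt (hT x).mpr hx)) (fun i j => hSigstar ▸ hmax i j)
    (by positivity) (mul_le_of_le_one_left hlam.le hα1.le)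
  have hsupport := sum_abs_le_sqrt_card_mul_frobNorm Δ T
  rw [hΔr, ← hm] at hsupport
  have hupper : c * r ^ 2 ≤ (1 + α) * lam * Real.sqrt m * r := by
    rw [hΔr] at hcurvΔ
    nlinarith [mul_le_mul_of_nonneg_left hsupport (by positivity : 0 ≤ lam + α * lam)]
  have hlower : (1 + α) * lam * Real.sqrt m * r < c * r ^ 2 := by
    nlinarith [mul_lt_mul_of_pos_right ((div_lt_iff₀' hc).mp hr) hr0]
  exact (hupper.trans_lt hlower).false

/-- Deterministic oracle inequality for the graphical lasso:
if `Θ*` is symmetric positive definite with `Σ* = (Θ*)⁻¹` and support `T` of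
cardinality `m`, `max_{ij} |S̃_{ij} − Σ*_{ij}| ≤ αλ` with `α ∈ (0,1)`,
`r > (1 + α)λ√m / c`, the curvature lower bound `∫₀¹(1 − v)tr(((Θ* + vΔ)⁻¹Δ)²)dv
≥ c‖Δ‖_F²` holds on the sphere `‖Δ‖_F = r` (for symmetric `Δ` with `Θ* + Δ`
positive definite), and `Θ̂` minimizes `Θ ↦ −log det Θ + tr(S̃Θ) + λ‖Θ‖₁` over
symmetric positive definite matrices, then `‖Θ̂ − Θ*‖_F < r`. -/
theorem stmt17 {p : ℕ} (Θstar : Matrix (Fin p) (Fin p) ℝ) (hΘstar : Θstar.PosDef)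
    (Sigstar : Matrix (Fin p) (Fin p) ℝ) (hSigstar : Sigstar = Θstar⁻¹)
    (T : Finset (Fin p × Fin p)) (hT : ∀ q : Fin p × Fin p, q ∈ T ↔ Θstar q.1 q.2 ≠ 0)
    (m : ℕ) (hm : m = T.card) (c : ℝ) (hc : 0 < c)
    (Stilde : Matrix (Fin p) (Fin p) ℝ) (hStilde : Stildeᵀ = Stilde)
    (lam α : ℝ) (hlam : 0 < lam) (hα : α ∈ Set.Ioo (0 : ℝ) 1)
    (hmax : ∀ i j, |Stilde i j - Sigstar i j| ≤ α * lam)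
    (r : ℝ) (hr : (1 + α) * lam * Real.sqrt m / c < r)
    (hcurv : ∀ Δ : Matrix (Fin p) (Fin p) ℝ, Δᵀ = Δ → frobNorm Δ = r →
      (Θstar + Δ).PosDef →
      c * frobNorm Δ ^ 2 ≤
        ∫ v in (0 : ℝ)..1,
          (1 - v) * ((((Θstar + v • Δ)⁻¹ * Δ) * ((Θstar + v • Δ)⁻¹ * Δ)).trace))
    (Θhat : Matrix (Fin p) (Fin p) ℝ) (hΘhatPD : Θhat.PosDef)
    (hΘhatmin : ∀ Θ : Matrix (Fin p) (Fin p) ℝ, Θ.PosDef →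
      -Real.log Θhat.det + (Stilde * Θhat).trace + lam * ∑ i, ∑ j, |Θhat i j| ≤
        -Real.log Θ.det + (Stilde * Θ).trace + lam * ∑ i, ∑ j, |Θ i j|) :
    frobNorm (Θhat - Θstar) < r :=
  stmt17_general Θstar hΘstar Sigstar hSigstar T hT m hm c hc Stilde lam α hlam hα hmax r hr hcurv
    Θhat hΘhatPD hΘhatmin
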